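/- arXiv:1705.05336 — 5 statements merged into one kernel-verified Lean document; each statement's English description precedes it below -/
import Mathlib

section
/- Let B be a Hermitian (ν+1)×(ν+1) matrix written in block form B = [[A, y],[y*, a]] with A a Hermitian ν×ν matrix, y ∈ ℂ^ν and a ∈ ℝ. Then the eigenvalues interlace: λ_k(B) ≤ λ_k(A) ≤ λ_{k+1}(B) for all k = 1,…,ν. -/
/-!
Compressing `B` to the first `ν` coordinates gives `A`: extension by a zero last coordinate is an
isometric embedding `J : ℂ^ν → ℂ^(ν+1)` with `⟪J v, B (J v)⟫ = ⟪v, A v⟫`. The image under `J` of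
the span of the eigenvectors of `A` for `λ_1(A), …, λ_k(A)` has dimension `k`, so it meets the
span of the eigenvectors of `B` for `λ_k(B), …, λ_{ν+1}(B)`, of dimension `ν + 2 - k`, in a
nonzero vector `x`. On the first space the Rayleigh quotient is at most `λ_k(A)`, on the second at
least `λ_k(B)`, so evaluating it at `x` gives `λ_k(B) ≤ λ_k(A)`. Exchanging the roles of the lower
and upper eigenvalues gives `λ_k(A) ≤ λ_{k+1}(B)`.
-/

open Matrix BigOperators

noncomputable def sortedEig {ν : ℕ} {A : Matrix (Fin ν) (Fin ν) ℂ}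
    (hA : A.IsHermitian) : Fin ν → ℝ :=
  hA.eigenvalues ∘ Tuple.sort hA.eigenvalues

open Module Submodule RCLike
open scoped InnerProductSpace

section Rayleigh

variable {𝕜 E ι : Type*} [RCLike 𝕜] [NormedAddCommGroup E] [InnerProductSpace 𝕜 E] [Fintype ι]
  {T : E →ₗ[𝕜] E} {b : OrthonormalBasis ι 𝕜 E} {μ : ι → ℝ}

theorem re_inner_map_self_eq_sum (hT : ∀ i, T (b i) = (μ i : 𝕜) • b i) (x : E) :
    re ⟪x, T x⟫_𝕜 = ∑ i, μ i * ‖⟪b i, x⟫_𝕜‖ ^ 2 := by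
  conv_lhs => rw [← b.sum_repr' x, map_sum]
  simp only [map_smul, hT, inner_sum, inner_smul_right, map_sum, b.sum_repr']
  refine Finset.sum_congr rfl fun i _ => ?_
  rw [← inner_conj_symm x (b i), mul_left_comm, RCLike.mul_conj, ← RCLike.ofReal_pow,
    ← RCLike.ofReal_mul, RCLike.ofReal_re]

theorem OrthonormalBasis.inner_eq_zero_of_mem_span_image {S : Set ι} {x : E}
    (hx : x ∈ span 𝕜 (b '' S)) {i : ι} (hi : i ∉ S) : ⟪b i, x⟫_𝕜 = 0 := by
  rw [← b.coe_toBasis, b.toBasis.mem_span_image] at hx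
  rw [← b.repr_apply_apply, ← b.coe_toBasis_repr_apply]
  by_contra h
  exact hi (hx (Finsupp.mem_support_iff.mpr h))

theorem re_inner_map_self_le_of_mem_span (hT : ∀ i, T (b i) = (μ i : 𝕜) • b i) {S : Set ι}
    {c : ℝ} (hμ : ∀ i ∈ S, μ i ≤ c) {x : E} (hx : x ∈ span 𝕜 (b '' S)) :
    re ⟪x, T x⟫_𝕜 ≤ c * ‖x‖ ^ 2 := by
  rw [re_inner_map_self_eq_sum hT, ← b.sum_sq_norm_inner_right, Finset.mul_sum]
  refine Finset.sum_le_sum fun i _ => ?_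
  by_cases hi : i ∈ S
  · exact mul_le_mul_of_nonneg_right (hμ i hi) (sq_nonneg _)
  · simp [b.inner_eq_zero_of_mem_span_image hx hi]

theorem le_re_inner_map_self_of_mem_span (hT : ∀ i, T (b i) = (μ i : 𝕜) • b i) {S : Set ι}
    {c : ℝ} (hμ : ∀ i ∈ S, c ≤ μ i) {x : E} (hx : x ∈ span 𝕜 (b '' S)) :
    c * ‖x‖ ^ 2 ≤ re ⟪x, T x⟫_𝕜 := by
  have hnegT : ∀ i, (-T) (b i) = ((-μ i : ℝ) : 𝕜) • b i := fun i => by simp [hT]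
  have := re_inner_map_self_le_of_mem_span hnegT (c := -c) (fun i hi => neg_le_neg (hμ i hi)) hx
  simp only [LinearMap.neg_apply, inner_neg_right, map_neg] at this
  linarith

end Rayleigh

theorem finrank_span_image_finset {K V ι : Type*} [DivisionRing K] [AddCommGroup V] [Module K V]
    {v : ι → V} (hv : LinearIndependent K v) (s : Finset ι) :
    finrank K (span K (v '' s)) = s.card := by
  rw [Set.image_eq_range]
  exact (finrank_span_eq_card (hv.comp _ Subtype.val_injective)).trans (Fintype.card_coe s)

theorem exists_ne_zero_mem_of_finrank_lt_add {K V : Type*} [DivisionRing K] [AddCommGroup V]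
    [Module K V] [FiniteDimensional K V] {U W : Submodule K V}
    (h : finrank K V < finrank K U + finrank K W) : ∃ x ∈ U, x ∈ W ∧ x ≠ 0 := by
  have := mt Submodule.finrank_add_finrank_le_of_disjoint (not_le.mpr h)
  simpa [Submodule.disjoint_def] using this

section CourantFischer

variable {𝕜 E : Type*} [RCLike 𝕜] [NormedAddCommGroup E] [InnerProductSpace 𝕜 E] {n : ℕ}
  {T : E →ₗ[𝕜] E} {b : OrthonormalBasis (Fin n) 𝕜 E} {μ : Fin n → ℝ}

theorem le_of_forall_re_inner_map_self_le (hT : ∀ i, T (b i) = (μ i : 𝕜) • b i)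
    (hμ : Monotone μ) {k : Fin n} {W : Submodule 𝕜 E} (hW : (k : ℕ) < finrank 𝕜 W) {c : ℝ}
    (hc : ∀ x ∈ W, re ⟪x, T x⟫_𝕜 ≤ c * ‖x‖ ^ 2) : μ k ≤ c := by
  have : FiniteDimensional 𝕜 E := b.toBasis.finiteDimensional_of_finite
  obtain ⟨x, hxW, hxU, hx⟩ := exists_ne_zero_mem_of_finrank_lt_add
    (U := W) (W := span 𝕜 (b '' ↑(Finset.Ici k))) (by
      rw [finrank_span_image_finset b.orthonormal.linearIndependent, Fin.card_Ici,
        finrank_eq_card_basis b.toBasis, Fintype.card_fin]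
      omega)
  have hlow := le_re_inner_map_self_of_mem_span hT (fun i hi => hμ (Finset.mem_Ici.mp hi)) hxU
  exact le_of_mul_le_mul_right (hlow.trans (hc x hxW)) (by positivity)

theorem le_of_forall_le_re_inner_map_self (hT : ∀ i, T (b i) = (μ i : 𝕜) • b i)
    (hμ : Monotone μ) {k : Fin n} {W : Submodule 𝕜 E} (hW : n ≤ finrank 𝕜 W + k) {c : ℝ}
    (hc : ∀ x ∈ W, c * ‖x‖ ^ 2 ≤ re ⟪x, T x⟫_𝕜) : c ≤ μ k := by
  have : FiniteDimensional 𝕜 E := b.toBasis.finiteDimensional_of_finite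
  obtain ⟨x, hxW, hxU, hx⟩ := exists_ne_zero_mem_of_finrank_lt_add
    (U := W) (W := span 𝕜 (b '' ↑(Finset.Iic k))) (by
      rw [finrank_span_image_finset b.orthonormal.linearIndependent, Fin.card_Iic,
        finrank_eq_card_basis b.toBasis, Fintype.card_fin]
      omega)
  have hup := re_inner_map_self_le_of_mem_span hT (fun i hi => hμ (Finset.mem_Iic.mp hi)) hxU
  exact le_of_mul_le_mul_right ((hc x hxW).trans hup) (by positivity)

end CourantFischer

theorem interlacing_of_compression {𝕜 E F : Type*} [RCLike 𝕜] [NormedAddCommGroup E]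
    [InnerProductSpace 𝕜 E] [NormedAddCommGroup F] [InnerProductSpace 𝕜 F] {n : ℕ}
    {T : E →ₗ[𝕜] E} {S : F →ₗ[𝕜] F} {bE : OrthonormalBasis (Fin (n + 1)) 𝕜 E}
    {bF : OrthonormalBasis (Fin n) 𝕜 F} {μ : Fin (n + 1) → ℝ} {μ' : Fin n → ℝ}
    (hT : ∀ i, T (bE i) = (μ i : 𝕜) • bE i) (hS : ∀ i, S (bF i) = (μ' i : 𝕜) • bF i)
    (hμ : Monotone μ) (hμ' : Monotone μ') (J : F →ₗᵢ[𝕜] E)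
    (hJ : ∀ v, ⟪J v, T (J v)⟫_𝕜 = ⟪v, S v⟫_𝕜) (k : Fin n) :
    μ k.castSucc ≤ μ' k ∧ μ' k ≤ μ k.succ := by
  have hfinrank (s : Finset (Fin n)) :
      finrank 𝕜 ((span 𝕜 (bF '' s)).map J.toLinearMap) = s.card := by
    rw [← (equivMapOfInjective _ J.injective _).finrank_eq,
      finrank_span_image_finset bF.orthonormal.linearIndependent]
  constructor
  · refine le_of_forall_re_inner_map_self_le hT hμ (W := (span 𝕜 (bF '' ↑(Finset.Iic k))).map
      J.toLinearMap) (by simp [hfinrank, Fin.card_Iic]) ?_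
    rintro _ ⟨v, hv, rfl⟩
    rw [LinearIsometry.coe_toLinearMap, hJ, J.norm_map]
    exact re_inner_map_self_le_of_mem_span hS (fun i hi => hμ' (Finset.mem_Iic.mp hi)) hv
  · refine le_of_forall_le_re_inner_map_self hT hμ (W := (span 𝕜 (bF '' ↑(Finset.Ici k))).map
      J.toLinearMap) (by simp [hfinrank, Fin.card_Ici]; omega) ?_
    rintro _ ⟨v, hv, rfl⟩
    rw [LinearIsometry.coe_toLinearMap, hJ, J.norm_map]
    exact le_re_inner_map_self_of_mem_span hS (fun i hi => hμ' (Finset.mem_Ici.mp hi)) hv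

section EuclideanSpace

variable {𝕜 : Type*} [RCLike 𝕜] {m n : Type*} [Fintype n] [DecidableEq n]

theorem Matrix.IsHermitian.toEuclideanLin_eigenvectorBasis {M : Matrix n n 𝕜}
    (hM : M.IsHermitian) (i : n) :
    M.toEuclideanLin (hM.eigenvectorBasis i) = (hM.eigenvalues i : 𝕜) • hM.eigenvectorBasis i :=
  WithLp.ofLp_injective 2 <| by
    simpa [toLpLin_apply, ← RCLike.real_smul_eq_coe_smul] using hM.mulVec_eigenvectorBasis i

theorem Matrix.inner_toEuclideanLin_eq_conjTranspose_mul_mul [Fintype m] [DecidableEq m]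
    (P : Matrix n m 𝕜) (M : Matrix n n 𝕜) (v w : EuclideanSpace 𝕜 m) :
    ⟪P.toEuclideanLin v, M.toEuclideanLin (P.toEuclideanLin w)⟫_𝕜 =
      ⟪v, (Pᴴ * M * P).toEuclideanLin w⟫_𝕜 := by
  rw [toLpLin_mul_same, toLpLin_mul_same]
  simp [toEuclideanLin_conjTranspose_eq_adjoint, LinearMap.adjoint_inner_right]

theorem Matrix.conjTranspose_submatrix_one_mul_mul (e : m ↪ n) (M : Matrix n n 𝕜) :
    ((1 : Matrix n n 𝕜).submatrix id e)ᴴ * M * (1 : Matrix n n 𝕜).submatrix id e =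
      M.submatrix e e := by
  ext i j
  simp [Matrix.mul_apply, Matrix.one_apply]

/-- The isometric embedding that extends a vector by zero outside the range of `e`. -/
noncomputable def EuclideanSpace.extendByZero [Fintype m] [DecidableEq m] (e : m ↪ n) :
    EuclideanSpace 𝕜 m →ₗᵢ[𝕜] EuclideanSpace 𝕜 n where
  toLinearMap := ((1 : Matrix n n 𝕜).submatrix id e).toEuclideanLin
  norm_map' v := by
    rw [← sq_eq_sq₀ (norm_nonneg _) (norm_nonneg _), @norm_sq_eq_re_inner 𝕜,
      @norm_sq_eq_re_inner 𝕜]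
    have h :=
      inner_toEuclideanLin_eq_conjTranspose_mul_mul ((1 : Matrix n n 𝕜).submatrix id e) 1 v v
    rw [conjTranspose_submatrix_one_mul_mul, submatrix_one_embedding] at h
    simpa using congrArg re h

theorem EuclideanSpace.inner_extendByZero_toEuclideanLin [Fintype m] [DecidableEq m] (e : m ↪ n)
    (M : Matrix n n 𝕜) (v : EuclideanSpace 𝕜 m) :
    ⟪extendByZero e v, M.toEuclideanLin (extendByZero e v)⟫_𝕜 =
      ⟪v, (M.submatrix e e).toEuclideanLin v⟫_𝕜 := by
  rw [← conjTranspose_submatrix_one_mul_mul]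
  exact inner_toEuclideanLin_eq_conjTranspose_mul_mul _ _ v v

end EuclideanSpace

section Sorted

variable {n : ℕ} {M : Matrix (Fin n) (Fin n) ℂ}

noncomputable def sortedEigenvectorBasis (hM : M.IsHermitian) :
    OrthonormalBasis (Fin n) ℂ (EuclideanSpace ℂ (Fin n)) :=
  hM.eigenvectorBasis.reindex (Tuple.sort hM.eigenvalues).symm

theorem toEuclideanLin_sortedEigenvectorBasis (hM : M.IsHermitian) (i : Fin n) :
    M.toEuclideanLin (sortedEigenvectorBasis hM i) =
      (sortedEig hM i : ℂ) • sortedEigenvectorBasis hM i := by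
  simpa [sortedEigenvectorBasis, sortedEig] using
    hM.toEuclideanLin_eigenvectorBasis (Tuple.sort hM.eigenvalues i)

theorem monotone_sortedEig (hM : M.IsHermitian) : Monotone (sortedEig hM) :=
  Tuple.monotone_sort _

end Sorted

/-- Cauchy interlacing for a bordered Hermitian matrix
`B = [[A, y],[y*, a]]`: `λ_k(B) ≤ λ_k(A) ≤ λ_{k+1}(B)`. -/
theorem bordered_hermitian_interlacing {ν : ℕ}
    (A : Matrix (Fin ν) (Fin ν) ℂ) (hA : A.IsHermitian)
    (y : Fin ν → ℂ) (a : ℝ)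
    (B : Matrix (Fin (ν + 1)) (Fin (ν + 1)) ℂ)
    (hBdef : B = Matrix.reindex finSumFinEquiv finSumFinEquiv
      (Matrix.fromBlocks A (Matrix.of fun i (_ : Fin 1) => y i)
        (Matrix.of fun (_ : Fin 1) j => star (y j))
        (Matrix.of fun (_ : Fin 1) (_ : Fin 1) => (a : ℂ))))
    (hB : B.IsHermitian) (k : Fin ν) :
    sortedEig hB k.castSucc ≤ sortedEig hA k ∧
      sortedEig hA k ≤ sortedEig hB k.succ := by
  have hcompress : B.submatrix Fin.castSuccEmb Fin.castSuccEmb = A := by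
    subst hBdef
    ext i j
    simp
  refine interlacing_of_compression (toEuclideanLin_sortedEigenvectorBasis hB)
    (toEuclideanLin_sortedEigenvectorBasis hA) (monotone_sortedEig hB) (monotone_sortedEig hA)
    (EuclideanSpace.extendByZero Fin.castSuccEmb) (fun v => ?_) k
  rw [EuclideanSpace.inner_extendByZero_toEuclideanLin, hcompress]
end

section
/- For each θ ∈ ℝ³, the eigenvalues of the 2×2 matrix Δ(θ) from the body-centered cubic lattice are λ_n(θ) = 1 − c₀/14 + (−1)^n/2 · √(c₀²/49 + (2/7)(1+cos θ₁)(1+cos θ₂)(1+cos θ₃)) for n = 1,2, where c₀ = cos θ₁ + cos θ₂ + cos θ₃; in particular λ₁(θ) ≤ 1 ≤ λ₂(θ) for all θ. -/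
open Matrix Complex

lemma normSq_one_add_exp (θ : ℝ) :
    Complex.normSq (1 + Complex.exp (-Complex.I * θ)) = 2 + 2 * Real.cos θ := by
  have h : -Complex.I * θ = ((-θ : ℝ) : ℂ) * Complex.I := by push_cast; ring
  rw [h, Complex.exp_mul_I]
  simp [Complex.normSq_apply, Complex.cos_ofReal_re, Complex.sin_ofReal_re,
    Complex.cos_ofReal_im, Complex.sin_ofReal_im]
  nlinarith [Real.sin_sq_add_cos_sq θ]

/-- Eigenvalues of the fiber Laplacian of the body-centered cubic lattice:
`λ_n(θ) = 1 − c₀/14 + (−1)^n/2 √(c₀²/49 + (2/7)(1+c₁)(1+c₂)(1+c₃))`, `n = 1,2`,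
and `λ₁(θ) ≤ 1 ≤ λ₂(θ)`. -/
theorem bcc_fiber_eigenvalues (θ₁ θ₂ θ₃ : ℝ)
    (c₀ : ℝ) (hc₀ : c₀ = Real.cos θ₁ + Real.cos θ₂ + Real.cos θ₃)
    (Δ₁₂ : ℂ)
    (hΔ₁₂ : Δ₁₂ = -(1 / (4 * Real.sqrt 7)) * (1 + Complex.exp (-Complex.I * θ₁))
      * (1 + Complex.exp (-Complex.I * θ₂)) * (1 + Complex.exp (-Complex.I * θ₃)))
    (Δ : Matrix (Fin 2) (Fin 2) ℂ)
    (hΔ : Δ = !![1, Δ₁₂; (starRingEnd ℂ) Δ₁₂, 1 - (c₀ : ℂ) / 7])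
    (lam : Fin 2 → ℝ)
    (hlam : ∀ n : Fin 2, lam n = 1 - c₀ / 14 + (-1) ^ ((n : ℕ) + 1) / 2 *
      Real.sqrt (c₀ ^ 2 / 49 +
        (2 / 7) * (1 + Real.cos θ₁) * (1 + Real.cos θ₂) * (1 + Real.cos θ₃))) :
    (∀ z : ℂ, (Δ - z • (1 : Matrix (Fin 2) (Fin 2) ℂ)).det = 0 ↔
      (z = (lam 0 : ℂ) ∨ z = (lam 1 : ℂ))) ∧
    lam 0 ≤ 1 ∧ 1 ≤ lam 1 := by
  set P : ℝ := (1 + Real.cos θ₁) * (1 + Real.cos θ₂) * (1 + Real.cos θ₃) with hP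
  have h1 := Real.neg_one_le_cos θ₁
  have h2 := Real.neg_one_le_cos θ₂
  have h3 := Real.neg_one_le_cos θ₃
  have hPnn : 0 ≤ P := by
    apply mul_nonneg (mul_nonneg (by linarith) (by linarith)) (by linarith)
  set D : ℝ := c₀ ^ 2 / 49 + (2 / 7) * (1 + Real.cos θ₁) * (1 + Real.cos θ₂) * (1 + Real.cos θ₃)
    with hD
  have hDP : D = c₀ ^ 2 / 49 + (2 / 7) * P := by rw [hD, hP]; ring
  have hDnn : 0 ≤ D := by rw [hDP]; positivity
  set s : ℝ := Real.sqrt D with hsdef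
  have hsnn : 0 ≤ s := Real.sqrt_nonneg _
  have hs2 : s ^ 2 = D := Real.sq_sqrt hDnn
  have hl0 : lam 0 = 1 - c₀ / 14 - s / 2 := by rw [hlam 0]; norm_num; ring
  have hl1 : lam 1 = 1 - c₀ / 14 + s / 2 := by rw [hlam 1]; norm_num; ring
  have h7 : Real.sqrt 7 * Real.sqrt 7 = 7 := Real.mul_self_sqrt (by norm_num)
  have hM : Δ₁₂ * (starRingEnd ℂ) Δ₁₂ = ((P / 14 : ℝ) : ℂ) := by
    rw [Complex.mul_conj]
    congr 1
    rw [hΔ₁₂]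
    simp only [_root_.map_mul, normSq_one_add_exp]
    rw [Complex.normSq_neg, Complex.normSq_div, Complex.normSq_mul, Complex.normSq_ofReal]
    rw [hP]
    norm_num [Complex.normSq_apply, h7]
    ring
  have hdet : ∀ z : ℂ, (Δ - z • (1 : Matrix (Fin 2) (Fin 2) ℂ)).det
      = (((lam 0 : ℝ) : ℂ) - z) * (((lam 1 : ℝ) : ℂ) - z) := by
    intro z
    rw [hΔ, Matrix.det_fin_two]
    simp [Matrix.one_apply]
    rw [hl0, hl1]
    have hs2c : ((s : ℂ)) ^ 2 = ((D : ℝ) : ℂ) := by exact_mod_cast congrArg (Complex.ofReal) hs2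
    have hDc : ((D : ℝ) : ℂ) = (c₀ : ℂ) ^ 2 / 49 + (2 / 7) * ((P : ℝ) : ℂ) := by
      rw [hDP]; push_cast; ring
    have hMc : Δ₁₂ * (starRingEnd ℂ) Δ₁₂ = ((P : ℝ) : ℂ) / 14 := by rw [hM]; push_cast; ring
    push_cast
    linear_combination -hMc + (1/4 : ℂ) * hs2c + (1/4 : ℂ) * hDc
  refine ⟨fun z => ?_, ?_, ?_⟩
  · rw [hdet z, mul_eq_zero, sub_eq_zero, sub_eq_zero]
    constructor
    · rintro (h | h) <;> [left; right] <;> exact h.symm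
    · rintro (h | h) <;> [left; right] <;> exact h.symm
  · rw [hl0]
    have hs2' : s ^ 2 = c₀ ^ 2 / 49 + 2 / 7 * P := by rw [hs2, hDP]
    nlinarith [hsnn, hPnn, hs2', sq_nonneg (s + c₀ / 7), sq_nonneg (s - c₀ / 7)]
  · rw [hl1]
    have hs2' : s ^ 2 = c₀ ^ 2 / 49 + 2 / 7 * P := by rw [hs2, hDP]
    nlinarith [hsnn, hPnn, hs2', sq_nonneg (s + c₀ / 7), sq_nonneg (s - c₀ / 7)]
end

section
/- The first band of the Laplacian on the body-centered cubic lattice is [0,1] and the second band is [1, 11/7]: with λ_n(θ) = 1 − c₀/14 + (−1)^n/2·√(c₀²/49 + (2/7)(1+c₁)(1+c₂)(1+c₃)) where c_j = cos θ_j and c₀ = c₁+c₂+c₃, one has min_θ λ₁(θ) = 0, max_θ λ₁(θ) = 1, min_θ λ₂(θ) = 1, and max_θ λ₂(θ) = 11/7, where θ ranges over [0,2π]³. -/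
/-!
Write `s = c₁ + c₂ + c₃`, `p = (1 + c₁)(1 + c₂)(1 + c₃)` and `r = √(s²/49 + 2p/7)`, so that
`λ₁ = 1 - s/14 - r/2` and `λ₂ = 1 - s/14 + r/2`. The four bounds say
`|s|/7 ≤ r ≤ min (2 - s/7) ((8 + s)/7)`; after squaring they become `0 ≤ p`, `p ≤ 14 - 2s` and
`7p ≤ 32 + 8s`, inequalities between multilinear functions on `[-1, 1]³` that hold at the vertices.
Equality is attained at `θ = 0`, `(π, π, π)` and `(π, 0, 0)`.
-/

open Real Set

noncomputable section

namespace BCC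

def root (a b c : ℝ) : ℝ :=
  √((a + b + c) ^ 2 / 49 + 2 / 7 * (1 + a) * (1 + b) * (1 + c))

def band (n : Fin 2) (a b c : ℝ) : ℝ :=
  1 - (a + b + c) / 14 + (-1) ^ ((n : ℕ) + 1) / 2 * root a b c

theorem band_zero (a b c : ℝ) : band 0 a b c = 1 - (a + b + c) / 14 - root a b c / 2 := by
  norm_num [band]; ring

theorem band_one (a b c : ℝ) : band 1 a b c = 1 - (a + b + c) / 14 + root a b c / 2 := by
  norm_num [band]; ring

section Cube

variable {a b c : ℝ} (ha : a ∈ Icc (-1 : ℝ) 1) (hb : b ∈ Icc (-1 : ℝ) 1) (hc : c ∈ Icc (-1 : ℝ) 1)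
include ha hb hc

theorem prod_one_add_nonneg : 0 ≤ (1 + a) * (1 + b) * (1 + c) := by
  have := ha.1; have := hb.1; have := hc.1
  exact mul_nonneg (mul_nonneg (by linarith) (by linarith)) (by linarith)

theorem prod_one_add_le_fourteen_sub : (1 + a) * (1 + b) * (1 + c) ≤ 14 - 2 * (a + b + c) := by
  obtain ⟨ha₀, ha₁⟩ := ha; obtain ⟨hb₀, hb₁⟩ := hb; obtain ⟨hc₀, hc₁⟩ := hc
  nlinarith [mul_nonneg (sub_nonneg.2 ha₁) (sub_nonneg.2 hb₁),
    mul_nonneg (neg_le_iff_add_nonneg'.1 ha₀) (neg_le_iff_add_nonneg'.1 hb₀),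
    mul_nonneg (mul_nonneg (neg_le_iff_add_nonneg'.1 ha₀) (neg_le_iff_add_nonneg'.1 hb₀))
      (sub_nonneg.2 hc₁)]

theorem seven_mul_prod_one_add_le : 7 * ((1 + a) * (1 + b) * (1 + c)) ≤ 32 + 8 * (a + b + c) := by
  obtain ⟨ha₀, ha₁⟩ := ha; obtain ⟨hb₀, hb₁⟩ := hb; obtain ⟨hc₀, hc₁⟩ := hc
  nlinarith [mul_nonneg (sub_nonneg.2 ha₁) (sub_nonneg.2 hb₁),
    mul_nonneg (neg_le_iff_add_nonneg'.1 ha₀) (neg_le_iff_add_nonneg'.1 hb₀),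
    mul_nonneg (mul_nonneg (neg_le_iff_add_nonneg'.1 ha₀) (neg_le_iff_add_nonneg'.1 hb₀))
      (sub_nonneg.2 hc₁)]

theorem abs_div_seven_le_root : |(a + b + c) / 7| ≤ root a b c := by
  have := prod_one_add_nonneg ha hb hc
  exact abs_le_sqrt (by nlinarith)

theorem root_le_two_sub : root a b c ≤ 2 - (a + b + c) / 7 := by
  have := prod_one_add_le_fourteen_sub ha hb hc
  have := ha.2; have := hb.2; have := hc.2
  exact (sqrt_le_left (by linarith)).2 (by nlinarith)

theorem root_le_eight_add : root a b c ≤ (8 + (a + b + c)) / 7 := by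
  have := seven_mul_prod_one_add_le ha hb hc
  have := ha.1; have := hb.1; have := hc.1
  exact (sqrt_le_left (by linarith)).2 (by nlinarith)

theorem band_zero_mem_Icc : band 0 a b c ∈ Icc 0 1 := by
  have := root_le_two_sub ha hb hc
  have := neg_le_of_abs_le (abs_div_seven_le_root ha hb hc)
  rw [band_zero]
  constructor <;> linarith

theorem band_one_mem_Icc : band 1 a b c ∈ Icc 1 (11 / 7) := by
  have := root_le_eight_add ha hb hc
  have := le_of_abs_le (abs_div_seven_le_root ha hb hc)
  rw [band_one]
  constructor <;> linarith

end Cube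

theorem root_one_one_one : root 1 1 1 = 11 / 7 := by
  rw [root, show (1 + 1 + 1 : ℝ) ^ 2 / 49 + 2 / 7 * (1 + 1) * (1 + 1) * (1 + 1) = (11 / 7) ^ 2 by
    norm_num, sqrt_sq (by norm_num)]

theorem root_neg_one_left (b c : ℝ) : root (-1) b c = |b + c - 1| / 7 := by
  rw [root, show (-1 + b + c) ^ 2 / 49 + 2 / 7 * (1 + -1) * (1 + b) * (1 + c) = ((b + c - 1) / 7) ^ 2
    by ring, sqrt_sq_eq_abs, abs_div, abs_of_pos (by norm_num : (0 : ℝ) < 7)]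

end BCC

open BCC

theorem isLeast_setOf_exists {α : Type*} {P : α → Prop} {f : α → ℝ} {m : ℝ} {x₀ : α}
    (h₀ : P x₀) (hm : f x₀ = m) (hle : ∀ x, P x → m ≤ f x) :
    IsLeast {y | ∃ x, P x ∧ y = f x} m :=
  ⟨⟨x₀, h₀, hm.symm⟩, by rintro _ ⟨x, hx, rfl⟩; exact hle x hx⟩

theorem isGreatest_setOf_exists {α : Type*} {P : α → Prop} {f : α → ℝ} {m : ℝ} {x₀ : α}
    (h₀ : P x₀) (hm : f x₀ = m) (hle : ∀ x, P x → f x ≤ m) :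
    IsGreatest {y | ∃ x, P x ∧ y = f x} m :=
  ⟨⟨x₀, h₀, hm.symm⟩, by rintro _ ⟨x, hx, rfl⟩; exact hle x hx⟩

/-- The first band of the Laplacian on the body-centered cubic lattice is `[0,1]`
and the second is `[1, 11/7]`: the explicit eigenvalue functions `λ₁, λ₂` attain
minimum/maximum `0, 1` and `1, 11/7` respectively over `θ ∈ [0,2π]³`. -/
theorem bcc_band_extrema
    (lam : Fin 2 → (Fin 3 → ℝ) → ℝ)
    (hlam : ∀ (n : Fin 2) (θ : Fin 3 → ℝ), lam n θ =
      1 - (Real.cos (θ 0) + Real.cos (θ 1) + Real.cos (θ 2)) / 14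
        + (-1) ^ ((n : ℕ) + 1) / 2 *
          Real.sqrt ((Real.cos (θ 0) + Real.cos (θ 1) + Real.cos (θ 2)) ^ 2 / 49 +
            (2 / 7) * (1 + Real.cos (θ 0)) * (1 + Real.cos (θ 1)) * (1 + Real.cos (θ 2)))) :
    IsLeast {x | ∃ θ : Fin 3 → ℝ, (∀ j, θ j ∈ Set.Icc 0 (2 * π)) ∧ x = lam 0 θ} 0 ∧
    IsGreatest {x | ∃ θ : Fin 3 → ℝ, (∀ j, θ j ∈ Set.Icc 0 (2 * π)) ∧ x = lam 0 θ} 1 ∧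
    IsLeast {x | ∃ θ : Fin 3 → ℝ, (∀ j, θ j ∈ Set.Icc 0 (2 * π)) ∧ x = lam 1 θ} 1 ∧
    IsGreatest {x | ∃ θ : Fin 3 → ℝ, (∀ j, θ j ∈ Set.Icc 0 (2 * π)) ∧ x = lam 1 θ} (11 / 7) := by
  have hband (n : Fin 2) (θ : Fin 3 → ℝ) :
      lam n θ = band n (cos (θ 0)) (cos (θ 1)) (cos (θ 2)) := hlam n θ
  have hcos (θ : Fin 3 → ℝ) (j : Fin 3) : cos (θ j) ∈ Icc (-1 : ℝ) 1 :=
    ⟨neg_one_le_cos _, cos_le_one _⟩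
  have h0 : (0 : ℝ) ∈ Icc 0 (2 * π) := ⟨le_rfl, by positivity⟩
  have hπ : π ∈ Icc 0 (2 * π) := ⟨pi_pos.le, by linarith [pi_pos]⟩
  have hπ00 : ∀ j, (![π, 0, 0] : Fin 3 → ℝ) j ∈ Icc 0 (2 * π) := by
    intro j; fin_cases j <;> assumption
  have hI₀ (θ : Fin 3 → ℝ) : lam 0 θ ∈ Icc 0 1 :=
    hband 0 θ ▸ band_zero_mem_Icc (hcos θ 0) (hcos θ 1) (hcos θ 2)
  have hI₁ (θ : Fin 3 → ℝ) : lam 1 θ ∈ Icc 1 (11 / 7) :=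
    hband 1 θ ▸ band_one_mem_Icc (hcos θ 0) (hcos θ 1) (hcos θ 2)
  refine ⟨isLeast_setOf_exists (x₀ := fun _ => 0) (fun _ => h0) ?_ fun θ _ => (hI₀ θ).1,
    isGreatest_setOf_exists (x₀ := fun _ => π) (fun _ => hπ) ?_ fun θ _ => (hI₀ θ).2,
    isLeast_setOf_exists hπ00 ?_ fun θ _ => (hI₁ θ).1,
    isGreatest_setOf_exists (x₀ := fun _ => 0) (fun _ => h0) ?_ fun θ _ => (hI₁ θ).2⟩
  · simp only [hband, band_zero, cos_zero, root_one_one_one]; norm_num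
  · simp only [hband, band_zero, cos_pi, root_neg_one_left]; norm_num
  · simp only [hband, band_one, Matrix.cons_val_zero, Matrix.cons_val_one, Matrix.cons_val, cos_pi,
      cos_zero, root_neg_one_left]
    norm_num
  · simp only [hband, band_one, cos_zero, root_one_one_one]; norm_num
end
end

section
/- For d ≥ 2 and each θ ∈ ℝ^d, the (d+1)×(d+1) Hermitian matrix Δ(θ) (identity top-left d×d block, entries −(1+e^{−iθ_j})/(2√d) in the last column, 1 in the corner) has eigenvalues 1 with multiplicity d−1 and 1 ∓ √((d+c₀)/(2d)) where c₀ = Σ_j cos θ_j; in particular the eigenvalue 1 is an eigenvalue of Δ(θ) for every θ. -/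
/-!
Write `Δ(θ) - z` as the bordered matrix `[[(1 - z) I, y], [y*, 1 - z]]`. For `z ≠ 1` the Schur
complement of the invertible block `(1 - z) I` gives the determinant
`(1 - z)^d (1 - z) - (1 - z)^(d-1) ‖y‖²`, and `‖y‖² = Σ_j (1 + cos θ_j) / (2d) = s²`.
Both sides are continuous in `z`, so the identity extends to `z = 1`, where it vanishes as `d ≥ 2`.
-/

open Matrix Complex

namespace Matrix

variable {K : Type*} {m n : Type*} [Fintype m] [DecidableEq m] [Fintype n] [DecidableEq n]

theorem det_fromBlocks_smul_one₁₁ [Field K] {a : K} (ha : a ≠ 0) (B : Matrix m n K)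
    (C : Matrix n m K) (D : Matrix n n K) :
    (fromBlocks (a • 1) B C D).det = a ^ Fintype.card m * (D - a⁻¹ • (C * B)).det := by
  have hfactor :
      fromBlocks (a • 1) B C D = fromBlocks (a • 1) 0 0 1 * fromBlocks 1 (a⁻¹ • B) C D := by
    rw [fromBlocks_multiply]
    simp [ha]
  rw [hfactor, det_mul, det_fromBlocks_zero₂₁, det_fromBlocks_one₁₁, det_smul, det_one, det_one,
    mul_one, mul_one, Matrix.mul_smul]

theorem det_fromBlocks_smul_one_replicateCol_replicateRow [NontriviallyNormedField K]
    [Nonempty m] {ι : Type*} [Unique ι] [Fintype ι] [DecidableEq ι] (a b : K) (u v : m → K) :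
    (fromBlocks (a • 1) (replicateCol ι u) (replicateRow ι v) (b • 1)).det
      = a ^ Fintype.card m * b - a ^ (Fintype.card m - 1) * (v ⬝ᵥ u) := by
  obtain ⟨k, hk⟩ : ∃ k, Fintype.card m = k + 1 := Nat.exists_eq_add_one.mpr Fintype.card_pos
  revert a
  refine congrFun <|
    Continuous.ext_on (dense_compl_singleton (0 : K)) (by fun_prop) (by fun_prop) ?_
  intro a (ha : a ≠ 0)
  dsimp only
  rw [det_fromBlocks_smul_one₁₁ ha, det_unique, hk]
  simp only [sub_apply, smul_apply, one_apply_eq, replicateRow_mul_replicateCol_apply,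
    smul_eq_mul, Nat.add_sub_cancel, pow_succ]
  field_simp

end Matrix

theorem Complex.normSq_one_add_exp_neg_I_mul (x : ℝ) :
    normSq (1 + exp (-I * x)) = 2 * (1 + Real.cos x) := by
  have hre : (1 + exp (-I * x)).re = 1 + Real.cos x := by simp [exp_re]
  have him : (1 + exp (-I * x)).im = -Real.sin x := by simp [exp_im]
  rw [normSq_apply, hre, him]
  linear_combination Real.sin_sq_add_cos_sq x

theorem sum_normSq_fiber_entries (d : ℕ) (θ : Fin d → ℝ) :
    ∑ j, normSq (-(1 + exp (-I * θ j)) / (2 * Real.sqrt d))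
      = (d + ∑ j, Real.cos (θ j)) / (2 * d) := by
  have hden : normSq (2 * Real.sqrt d : ℂ) = 4 * d := by
    rw [normSq_mul, ← ofReal_ofNat, normSq_ofReal, normSq_ofReal, Real.mul_self_sqrt d.cast_nonneg]
    ring
  simp only [normSq_div, normSq_neg, hden, Complex.normSq_one_add_exp_neg_I_mul, ← Finset.sum_div,
    ← Finset.mul_sum, Finset.sum_add_distrib]
  simp only [Finset.sum_const, Finset.card_univ, Fintype.card_fin, nsmul_eq_mul, mul_one]
  field_simp
  ring

/-- For `d ≥ 2`, the fiber Laplacian `Δ(θ)` of the once-subdivided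
`d`-dimensional lattice has eigenvalues `1` with multiplicity `d−1` and
`1 ∓ √((d+c₀)/(2d))`; in particular `1` is an eigenvalue for every `θ`. -/
theorem subdivided_lattice_fiber_eigenvalues (d : ℕ) (hd : 2 ≤ d) (θ : Fin d → ℝ)
    (c₀ : ℝ) (hc₀ : c₀ = ∑ j, Real.cos (θ j))
    (y : Fin d → ℂ)
    (hy : ∀ j, y j = -(1 + Complex.exp (-Complex.I * θ j)) / (2 * Real.sqrt d))
    (Δ : Matrix (Fin d ⊕ Fin 1) (Fin d ⊕ Fin 1) ℂ)
    (hΔ : Δ = Matrix.fromBlocks 1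
      (Matrix.of fun j (_ : Fin 1) => y j)
      (Matrix.of fun (_ : Fin 1) j => (starRingEnd ℂ) (y j)) 1)
    (s : ℝ) (hs : s = Real.sqrt (((d : ℝ) + c₀) / (2 * d))) :
    (∀ z : ℂ, (Δ - z • (1 : Matrix (Fin d ⊕ Fin 1) (Fin d ⊕ Fin 1) ℂ)).det
      = (1 - z) ^ (d - 1) * (z - (1 - (s : ℂ))) * (z - (1 + (s : ℂ)))) ∧
    (Δ - (1 : Matrix (Fin d ⊕ Fin 1) (Fin d ⊕ Fin 1) ℂ)).det = 0 := by
  have hc₀_ge : -(d : ℝ) ≤ c₀ := by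
    simpa [hc₀] using Finset.sum_le_sum fun j (_ : j ∈ Finset.univ) => Real.neg_one_le_cos (θ j)
  have hs_sq : s ^ 2 = ((d : ℝ) + c₀) / (2 * d) := by
    rw [hs, Real.sq_sqrt (div_nonneg (by linarith) (by positivity))]
  have hdot : (starRingEnd ℂ ∘ y) ⬝ᵥ y = (s : ℂ) ^ 2 := by
    simp only [dotProduct, Function.comp_apply, ← normSq_eq_conj_mul_self, hy]
    exact_mod_cast (sum_normSq_fiber_entries d θ).trans (by rw [hs_sq, hc₀])
  have hdet (z : ℂ) : (Δ - z • (1 : Matrix (Fin d ⊕ Fin 1) (Fin d ⊕ Fin 1) ℂ)).det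
      = (1 - z) ^ (d - 1) * (z - (1 - (s : ℂ))) * (z - (1 + (s : ℂ))) := by
    have hblock : Δ - z • 1 = fromBlocks ((1 - z) • 1) (replicateCol (Fin 1) y)
        (replicateRow (Fin 1) (starRingEnd ℂ ∘ y)) ((1 - z) • 1) := by
      rw [hΔ, ← fromBlocks_one, fromBlocks_smul, sub_eq_add_neg, fromBlocks_neg, fromBlocks_add]
      simp only [smul_zero, neg_zero, add_zero, ← sub_eq_add_neg, sub_smul, one_smul]
      rfl
    have : Nonempty (Fin d) := ⟨⟨0, by omega⟩⟩
    rw [hblock, det_fromBlocks_smul_one_replicateCol_replicateRow, hdot, Fintype.card_fin]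
    obtain ⟨k, rfl⟩ : ∃ k, d = k + 1 := ⟨d - 1, by omega⟩
    rw [Nat.add_sub_cancel, pow_succ]
    ring
  refine ⟨hdet, ?_⟩
  simpa [zero_pow (by omega : d - 1 ≠ 0)] using hdet 1
end

section
/- Let H(θ) = Δ(θ) + diag(q₁,…,q_{ν−1},0) where Δ(θ) is the ν×ν matrix with top-left identity block I_{ν−1}, last column entries −1/√ξ, and corner entry 1 − 2c₀(θ)/ξ with ξ = ν−1+2d and c₀(θ) = Σ_{j=1}^d cos θ_j. Then det(H(θ) − λ·I_ν) = (1/ξ)[(ξ − ξλ − 2c₀(θ))·W(λ) + W'(λ)], where W(λ) = Π_{j=1}^{ν−1}(1 + q_j − λ). -/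
/-!
`H(θ) - λ` is an arrowhead matrix: the diagonal block `diag(1 + q_j - λ)` bordered by a constant
column and row `b = -1/√ξ`. When the diagonal entries `v_j` are nonzero, the Schur complement of
the diagonal block gives `det = c ∏ v_j - b² ∑_j ∏_{k ≠ j} v_k`; both sides are continuous in `v`,
so the formula holds for all `v`. Finally `b² = 1/ξ` and `∑_j ∏_{k ≠ j} (1 + q_k - λ) = -W'(λ)`.
-/

open Matrix Finset

section
variable {ι o : Type*} [Fintype ι] [DecidableEq ι] [Fintype o] [DecidableEq o] [Unique o]

theorem det_fromBlocks_diagonal_replicateCol_replicateRow_of_ne_zero {K : Type*} [Field K]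
    {v : ι → K} (hv : ∀ i, v i ≠ 0) (u w : ι → K) (c : K) :
    (fromBlocks (diagonal v) (replicateCol o u) (replicateRow o w) (of fun _ _ => c)).det
      = c * ∏ i, v i - ∑ i, u i * w i * ∏ k ∈ univ.erase i, v k := by
  have hinv : (diagonal v)⁻¹ = diagonal v⁻¹ := inv_eq_left_inv <| by
    rw [diagonal_mul_diagonal, ← diagonal_one]
    exact congrArg diagonal (funext fun i => inv_mul_cancel₀ (hv i))
  have : Invertible (diagonal v) :=
    invertibleOfIsUnitDet _ (by simpa [det_diagonal, prod_ne_zero_iff] using hv)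
  rw [det_fromBlocks₁₁, invOf_eq_nonsing_inv, hinv, det_diagonal, det_unique]
  simp only [Matrix.sub_apply, of_apply, mul_apply, diagonal_apply, replicateRow_apply,
    replicateCol_apply, mul_ite, mul_zero, sum_ite_eq', mem_univ, if_true, Pi.inv_apply]
  rw [mul_sub, mul_sum]
  congr 1
  · ring
  refine sum_congr rfl fun i _ => ?_
  rw [← mul_prod_erase univ v (mem_univ i)]
  field_simp [hv i]

theorem det_fromBlocks_diagonal_replicateCol_replicateRow (v u w : ι → ℝ) (c : ℝ) :
    (fromBlocks (diagonal v) (replicateCol o u) (replicateRow o w) (of fun _ _ => c)).det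
      = c * ∏ i, v i - ∑ i, u i * w i * ∏ k ∈ univ.erase i, v k := by
  have hdense : Dense (Set.univ.pi fun _ : ι => ({0}ᶜ : Set ℝ)) :=
    dense_pi _ fun _ _ => dense_compl_singleton 0
  refine congrFun (Continuous.ext_on hdense
    (f := fun v => (fromBlocks (diagonal v) (replicateCol o u) (replicateRow o w)
      (of fun _ _ => c)).det)
    (g := fun v => c * ∏ i, v i - ∑ i, u i * w i * ∏ k ∈ univ.erase i, v k)
    (by fun_prop) (by fun_prop) fun v hv => ?_) v
  exact det_fromBlocks_diagonal_replicateCol_replicateRow_of_ne_zero (fun i => hv i trivial) u w c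

end

theorem hasDerivAt_prod_sub {ι : Type*} [DecidableEq ι] (s : Finset ι) (a : ι → ℝ) (t : ℝ) :
    HasDerivAt (fun t => ∏ i ∈ s, (a i - t)) (-∑ i ∈ s, ∏ k ∈ s.erase i, (a k - t)) t := by
  simpa using HasDerivAt.fun_finsetProd (u := s) fun i _ => (hasDerivAt_id t).const_sub (a i)

theorem perturbed_lattice_schrodinger_charpoly_general (d n : ℕ) (hd : 1 ≤ d)
    (q : Fin n → ℝ)
    (ξ : ℝ) (hξ : ξ = (n : ℝ) + 2 * d)
    (c₀ : ℝ)
    (H : Matrix (Fin n ⊕ Fin 1) (Fin n ⊕ Fin 1) ℝ)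
    (hH : H = Matrix.fromBlocks
      (1 + Matrix.diagonal q)
      (Matrix.of fun _ (_ : Fin 1) => -1 / Real.sqrt ξ)
      (Matrix.of fun (_ : Fin 1) _ => -1 / Real.sqrt ξ)
      (Matrix.of fun (_ : Fin 1) (_ : Fin 1) => 1 - 2 * c₀ / ξ))
    (W : ℝ → ℝ) (hW : ∀ lam, W lam = ∏ j, (1 + q j - lam))
    (lam : ℝ) :
    (H - lam • (1 : Matrix (Fin n ⊕ Fin 1) (Fin n ⊕ Fin 1) ℝ)).det
      = (1 / ξ) * ((ξ - ξ * lam - 2 * c₀) * W lam + deriv W lam) := by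
  have hξpos : 0 < ξ := by
    have : (1 : ℝ) ≤ d := by exact_mod_cast hd
    rw [hξ]
    positivity
  set b := -1 / Real.sqrt ξ
  have hb : b * b = 1 / ξ := by
    rw [div_mul_div_comm, Real.mul_self_sqrt hξpos.le]
    norm_num
  have hblock : H - lam • 1 = fromBlocks (diagonal fun j => 1 + q j - lam)
      (replicateCol (Fin 1) fun _ => b) (replicateRow (Fin 1) fun _ => b)
      (of fun _ _ => 1 - 2 * c₀ / ξ - lam) := by
    subst hH
    ext (i | i) (j | j)
    · by_cases h : i = j <;> simp [h, one_apply]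
    · simp
    · simp
    · simp [Subsingleton.elim i j]
  have hderiv : deriv W lam = -∑ j, ∏ k ∈ univ.erase j, (1 + q k - lam) := by
    rw [funext hW]
    exact (hasDerivAt_prod_sub _ _ lam).deriv
  rw [hblock, det_fromBlocks_diagonal_replicateCol_replicateRow, hW, hderiv, ← mul_sum, hb]
  field_simp
  ring

/-- Characteristic polynomial of the fiber Schrödinger operator
`H(θ) = Δ(θ) + diag(q₁,…,q_{ν−1},0)` on the perturbed `d`-dimensional lattice:
`det(H(θ) − λI) = (1/ξ)[(ξ − ξλ − 2c₀)W(λ) + W'(λ)]`,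
with `W(λ) = ∏_{j}(1 + q_j − λ)`, `ξ = ν − 1 + 2d`. Here the `ν−1 = n` vertices
carrying the potential are indexed by `Fin n` and the remaining vertex by `Fin 1`. -/
theorem perturbed_lattice_schrodinger_charpoly (d n : ℕ) (hd : 1 ≤ d) (hn : 1 ≤ n)
    (θ : Fin d → ℝ) (q : Fin n → ℝ)
    (ξ : ℝ) (hξ : ξ = (n : ℝ) + 2 * d)
    (c₀ : ℝ) (hc₀ : c₀ = ∑ j, Real.cos (θ j))
    (H : Matrix (Fin n ⊕ Fin 1) (Fin n ⊕ Fin 1) ℝ)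
    (hH : H = Matrix.fromBlocks
      (1 + Matrix.diagonal q)
      (Matrix.of fun _ (_ : Fin 1) => -1 / Real.sqrt ξ)
      (Matrix.of fun (_ : Fin 1) _ => -1 / Real.sqrt ξ)
      (Matrix.of fun (_ : Fin 1) (_ : Fin 1) => 1 - 2 * c₀ / ξ))
    (W : ℝ → ℝ) (hW : ∀ lam, W lam = ∏ j, (1 + q j - lam))
    (lam : ℝ) :
    (H - lam • (1 : Matrix (Fin n ⊕ Fin 1) (Fin n ⊕ Fin 1) ℝ)).det
      = (1 / ξ) * ((ξ - ξ * lam - 2 * c₀) * W lam + deriv W lam) :=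
  perturbed_lattice_schrodinger_charpoly_general d n hd q ξ hξ c₀ H hH W hW lam
end
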